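/- arXiv:1605.02583 — 3 statements merged into one kernel-verified Lean document; each statement's English description precedes it below -/
import Mathlib

section
/- Let P, C, D be points in the Euclidean plane with C ≠ P, let A be the point symmetric to C with respect to P (i.e., P is the midpoint of segment CA), and suppose D lies on the circle with center A and radius AP. Let B be a point on line PD with B ≠ P lying on the circle with center C and radius CP. Then the quadrilateral ABCD is a parallelogram, i.e., vector AB equals vector DC. -/
/-!
The point reflection through `P` swaps the circle about `A` through `P` with the circle about
`C` through `P`, and fixes the line `PD`. Hence the reflection `2P - D` of `D` is, like `B`, a
point of the circle about `C` on the line `PD` other than `P`. A line through a point of a circle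
meets it in at most one further point, so `B = 2P - D`, and `B - A = (2P - D) - (2P - C) = C - D`.
-/

open EuclideanGeometry

namespace EuclideanGeometry

variable {V Pt : Type*} [NormedAddCommGroup V] [InnerProductSpace ℝ V] [MetricSpace Pt]
  [NormedAddTorsor V Pt]

theorem Sphere.eq_of_mem_of_mem_mk'_span_singleton {s : Sphere Pt} {p p₁ p₂ : Pt} {v : V}
    (hp : p ∈ s) (hp₁ : p₁ ∈ s) (hp₂ : p₂ ∈ s) (hl₁ : p₁ ∈ AffineSubspace.mk' p (ℝ ∙ v))
    (hl₂ : p₂ ∈ AffineSubspace.mk' p (ℝ ∙ v)) (hne₁ : p₁ ≠ p) (hne₂ : p₂ ≠ p) : p₁ = p₂ := by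
  rw [((eq_or_eq_secondInter_of_mem_mk'_span_singleton_iff_mem hp hl₁).2 hp₁).resolve_left hne₁,
    ((eq_or_eq_secondInter_of_mem_mk'_span_singleton_iff_mem hp hl₂).2 hp₂).resolve_left hne₂]

end EuclideanGeometry

theorem dist_two_smul_sub_right {V : Type*} [NormedAddCommGroup V] [Module ℝ V] (P C D : V) :
    dist C ((2 : ℝ) • P - D) = dist ((2 : ℝ) • P - C) D := by
  rw [dist_eq_norm, dist_eq_norm, ← norm_neg]
  congr 1
  module

theorem stmt0_general (P C A D B : EuclideanSpace ℝ (Fin 2))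
    (hA : A = (2:ℝ) • P - C)
    (hD : dist A D = dist A P)
    (hBline : ∃ t : ℝ, t < 0 ∧ B - P = t • (D - P))
    (hBP : B ≠ P) (hB : dist C B = dist C P) :
    B - A = C - D := by
  obtain ⟨t, -, htB⟩ := hBline
  have hDP : D ≠ P := by
    rintro rfl
    exact hBP (sub_eq_zero.1 (by simpa using htB))
  let s : Sphere (EuclideanSpace ℝ (Fin 2)) := ⟨C, dist C P⟩
  have hP : P ∈ s := mem_sphere'.2 rfl
  have hBs : B ∈ s := mem_sphere'.2 hB
  have hDs : (2 : ℝ) • P - D ∈ s := by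
    refine mem_sphere'.2 ?_
    calc dist C ((2 : ℝ) • P - D) = dist A D := by rw [hA, dist_two_smul_sub_right]
      _ = dist A P := hD
      _ = dist C P := by
        rw [hA, dist_comm C, dist_eq_norm, dist_eq_norm]
        congr 1
        module
  have hBl : B ∈ AffineSubspace.mk' P (ℝ ∙ (D - P)) :=
    AffineSubspace.mem_mk'.2 (Submodule.mem_span_singleton.2 ⟨t, htB.symm⟩)
  have hDl : (2 : ℝ) • P - D ∈ AffineSubspace.mk' P (ℝ ∙ (D - P)) :=
    AffineSubspace.mem_mk'.2 <| Submodule.mem_span_singleton.2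
      ⟨-1, by simp only [vsub_eq_sub]; module⟩
  have hD'P : (2 : ℝ) • P - D ≠ P := fun h => hDP (by linear_combination (norm := module) -h)
  rw [Sphere.eq_of_mem_of_mem_mk'_span_singleton hP hBs hDs hBl hDl hBP hD'P, hA]
  module

theorem stmt0 (P C A D B : EuclideanSpace ℝ (Fin 2))
    (hCP : C ≠ P) (hA : A = (2:ℝ) • P - C)
    (hD : dist A D = dist A P)
    (hBline : ∃ t : ℝ, t < 0 ∧ B - P = t • (D - P))
    (hBP : B ≠ P) (hB : dist C B = dist C P) :
    B - A = C - D :=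
  stmt0_general P C A D B hA hD hBline hBP hB
end

section
/- Let P, C, A, B, D be points in the plane with A = 2P - C (A symmetric to C through P). Suppose dist(C,B) = dist(C,P), dist(A,D) = dist(A,P), and B, P, D are collinear with P strictly between B and D. Then dist(P,B) = dist(P,D). -/
/-! The point reflection through `P` is an isometry taking the circle about `C` through `P` to
the circle about `A` through `P`, and it keeps the line `BD` (which passes through `P`). So it
sends `B` to a point of the circle about `A` on that line other than `P`; the line meets the
circle in only one such point, namely `D`. Hence `PB = P(2P - B) = PD`. -/

open EuclideanGeometry

theorem AffineSubspace.pointReflection_mem {k V P : Type*} [Ring k] [AddCommGroup V] [Module k V]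
    [AddTorsor V P] {s : AffineSubspace k P} {p x : P} (hp : p ∈ s) (hx : x ∈ s) :
    Equiv.pointReflection p x ∈ s :=
  AffineSubspace.vadd_mem_of_mem_direction (AffineSubspace.vsub_mem_direction hp hx) hp

section

variable {V Pt : Type*} [NormedAddCommGroup V] [InnerProductSpace ℝ V] [MetricSpace Pt]
  [NormedAddTorsor V Pt]

theorem EuclideanGeometry.Sphere.eq_of_mem_of_mem_affineSpan_pair {s : Sphere Pt}
    {p q x y : Pt} (hp : p ∈ s) (hx : x ∈ s) (hy : y ∈ s) (hxl : x ∈ line[ℝ, p, q])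
    (hyl : y ∈ line[ℝ, p, q]) (hxp : x ≠ p) (hyp : y ≠ p) : x = y := by
  rw [((s.eq_or_eq_secondInter_iff_mem_of_mem_affineSpan_pair hp hxl).2 hx).resolve_left hxp,
    ((s.eq_or_eq_secondInter_iff_mem_of_mem_affineSpan_pair hp hyl).2 hy).resolve_left hyp]

theorem dist_eq_of_mem_affineSpan_pair_of_dist_pointReflection_eq {p c b d : Pt}
    (hb : dist c b = dist c p)
    (hd : dist (Equiv.pointReflection p c) d = dist (Equiv.pointReflection p c) p)
    (hbl : b ∈ line[ℝ, p, d]) (hbp : b ≠ p) (hdp : d ≠ p) : dist p b = dist p d := by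
  set s : Sphere Pt := ⟨Equiv.pointReflection p c, dist c p⟩
  have hs : ∀ x, x ∈ s ↔ dist x (Equiv.pointReflection p c) = dist c p := fun _ => mem_sphere
  have hreflect : Equiv.pointReflection p b = d := by
    refine s.eq_of_mem_of_mem_affineSpan_pair (p := p) (q := d) ?_ ?_ ?_ ?_
      (right_mem_affineSpan_pair ..) ?_ hdp
    · rw [hs, dist_left_pointReflection, dist_comm]
    · rw [hs, ← hb, dist_comm c]
      exact (AffineIsometryEquiv.pointReflection ℝ p).dist_map b c
    · rw [hs, dist_comm, hd, dist_pointReflection_left, dist_comm]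
    · exact AffineSubspace.pointReflection_mem (left_mem_affineSpan_pair ..) hbl
    · simpa using (Equiv.pointReflection p).injective.ne hbp
  rw [← hreflect, dist_left_pointReflection]

end

theorem stmt1 (P C A B D : EuclideanSpace ℝ (Fin 2))
    (hA : A = (2:ℝ) • P - C)
    (hB : dist C B = dist C P) (hD : dist A D = dist A P)
    (hbtw : Sbtw ℝ B P D) :
    dist P B = dist P D := by
  have hA' : A = Equiv.pointReflection P C := by
    rw [hA, Equiv.pointReflection_apply, vsub_eq_sub, vadd_eq_add]
    module
  have hBl : B ∈ line[ℝ, P, D] :=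
    hbtw.wbtw.collinear.mem_affineSpan_of_mem_of_ne (by simp) (by simp) (by simp)
      hbtw.ne_right
  rw [hA'] at hD
  exact dist_eq_of_mem_affineSpan_pair_of_dist_pointReflection_eq hB hD hBl hbtw.ne_left.symm
    hbtw.ne_right.symm
end

section
/- Let P, C be points with C ≠ P, A = 2P - C. The set of points D ≠ P such that, with B defined as the second intersection of line PD with the circle centered at C of radius CP, the quadrilateral ABCD is a parallelogram, is exactly the circle centered at A with radius AP minus the point P. -/
/-!
The point reflection `ρ` in `P` is an isometry exchanging `A` and `C`. Since the diagonals of a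
parallelogram bisect each other, `ABCD` is a parallelogram iff `B = ρ D`. The point `ρ D ≠ P` lies
on the line `PD`, and `dist A D = dist A P` iff `dist C (ρ D) = dist C P`, i.e. iff `ρ D` is on the
circle about `C` through `P`. A line through `P` meets that circle in at most one further point,
which is `B`.
-/

namespace EuclideanGeometry

variable {V Pt : Type*} [NormedAddCommGroup V] [InnerProductSpace ℝ V] [MetricSpace Pt]
  [NormedAddTorsor V Pt]

theorem Sphere.eq_secondInter_of_mem_affineSpan_pair_of_ne {s : Sphere Pt} {p q p' : Pt}
    (hp : p ∈ s) (hp' : p' ∈ s) (hpq : p' ∈ line[ℝ, p, q]) (hp'p : p' ≠ p) :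
    p' = s.secondInter p (q -ᵥ p) :=
  ((Sphere.eq_or_eq_secondInter_iff_mem_of_mem_affineSpan_pair hp hpq).mpr hp').resolve_left hp'p

theorem pointReflection_mem_affineSpan_pair (p q : Pt) :
    AffineIsometryEquiv.pointReflection ℝ p q ∈ line[ℝ, p, q] := by
  convert AffineMap.lineMap_mem_affineSpan_pair (-1 : ℝ) p q using 1
  rw [AffineMap.lineMap_apply, neg_one_smul, neg_vsub_eq_vsub_rev,
    AffineIsometryEquiv.pointReflection_apply]

theorem vsub_eq_vsub_iff_dist_eq_of_midpoint_eq {A B C D P : Pt} (hP : midpoint ℝ A C = P)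
    (hDP : D ≠ P) (hB : B ∈ line[ℝ, P, D]) (hBP : B ≠ P) (hCB : dist C B = dist C P) :
    B -ᵥ A = C -ᵥ D ↔ dist A D = dist A P := by
  set ρ := AffineIsometryEquiv.pointReflection ℝ P
  set s : Sphere Pt := ⟨C, dist P C⟩
  have hρA : ρ A = C := (midpoint_eq_iff (R := ℝ)).mp hP
  have hρP : ρ P = P := AffineIsometryEquiv.pointReflection_self P
  have hPs : P ∈ s := mem_sphere.mpr rfl
  have hparallelogram : B -ᵥ A = C -ᵥ D ↔ ρ D = B := by
    rw [← midpoint_eq_midpoint_iff_vsub_eq_vsub ℝ, hP, midpoint_comm]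
    exact midpoint_eq_iff
  have hreflect : dist A D = dist A P ↔ dist C (ρ D) = dist C P := by
    rw [← hρA, ρ.dist_map, ← hρP, ρ.dist_map, hρP]
  rw [hparallelogram, hreflect]
  constructor
  · rintro rfl
    exact hCB
  · intro hCD
    have hρD : ρ D ≠ P := fun h => hDP (ρ.injective (h.trans hρP.symm))
    have hBs : B ∈ s := mem_sphere.mpr ((dist_comm B C).trans (hCB.trans (dist_comm C P)))
    have hρDs : ρ D ∈ s := mem_sphere.mpr ((dist_comm _ C).trans (hCD.trans (dist_comm C P)))
    rw [Sphere.eq_secondInter_of_mem_affineSpan_pair_of_ne hPs hρDs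
        (pointReflection_mem_affineSpan_pair P D) hρD,
      Sphere.eq_secondInter_of_mem_affineSpan_pair_of_ne hPs hBs hB hBP]

end EuclideanGeometry

theorem stmt12_general (P C A : EuclideanSpace ℝ (Fin 2))
    (hA : A = (2:ℝ) • P - C) :
    ∀ D B : EuclideanSpace ℝ (Fin 2), D ≠ P →
      ¬ Collinear ℝ ({A, C, D} : Set (EuclideanSpace ℝ (Fin 2))) →
      Collinear ℝ ({P, D, B} : Set (EuclideanSpace ℝ (Fin 2))) →
      B ≠ P → dist C B = dist C P →
      (B - A = C - D ↔ dist A D = dist A P) := by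
  intro D B hDP _ hcol hBP hCB
  have hP : midpoint ℝ A C = P := by
    rw [hA, midpoint_eq_smul_add, invOf_eq_inv]
    module
  have hB : B ∈ line[ℝ, P, D] :=
    hcol.mem_affineSpan_of_mem_of_ne (by simp) (by simp) (by simp) hDP.symm
  exact EuclideanGeometry.vsub_eq_vsub_iff_dist_eq_of_midpoint_eq hP hDP hB hBP hCB

theorem stmt12 (P C A : EuclideanSpace ℝ (Fin 2))
    (hCP : C ≠ P) (hA : A = (2:ℝ) • P - C) :
    ∀ D B : EuclideanSpace ℝ (Fin 2), D ≠ P →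
      ¬ Collinear ℝ ({A, C, D} : Set (EuclideanSpace ℝ (Fin 2))) →
      Collinear ℝ ({P, D, B} : Set (EuclideanSpace ℝ (Fin 2))) →
      B ≠ P → dist C B = dist C P →
      (B - A = C - D ↔ dist A D = dist A P) :=
  stmt12_general P C A hA
end
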